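/- arXiv:math/0312450 — 4 statements merged into one kernel-verified Lean document; each statement's English description precedes it below -/
import Mathlib

section
/- Let K be a graph of bounded valence, σ a U(1)-valued multiplier on oriented edges with σ([u,v]) = conj(σ([v,u])), and Δ_σ the discrete magnetic Laplacian defined by (Δ_σ f)(v) = Σ_{w∼v}(f(v) − σ([w,v])f(w)). Then for every f ∈ C⁰₍₂₎(K) one has the pointwise Kato inequality: |f|(v) · (Δ|f|)(v) ≤ Re( (Δ_σ f)(v) · conj(f(v)) ) for every vertex v. -/
open ComplexConjugate

/-- The combinatorial Laplacian on real-valued functions. -/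
noncomputable def combLap {V : Type*} (G : SimpleGraph V) [G.LocallyFinite]
    (f : V → ℝ) (v : V) : ℝ :=
  ∑ w ∈ G.neighborFinset v, (f v - f w)

/-- The discrete magnetic Laplacian associated to a multiplier `σ`:
`(Δ_σ f)(v) = ∑_{w ∼ v} (f v - σ [w,v] * f w)`. -/
noncomputable def magLap {V : Type*} (G : SimpleGraph V) [G.LocallyFinite]
    (σ : V → V → ℂ) (f : V → ℂ) (v : V) : ℂ :=
  ∑ w ∈ G.neighborFinset v, (f v - σ w v * f w)

/-- Discrete Kato inequality: for every square-summable `f` and every vertex `v`,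
`|f|(v) · (Δ|f|)(v) ≤ Re((Δ_σ f)(v) · conj (f v))`. -/
theorem discrete_kato_inequality {V : Type*} (G : SimpleGraph V) [G.LocallyFinite]
    (M : ℕ) (hM : ∀ v, G.degree v ≤ M)
    (σ : V → V → ℂ) (hσ1 : ∀ u v, G.Adj u v → ‖σ u v‖ = 1)
    (hσ2 : ∀ u v, G.Adj u v → σ u v = conj (σ v u))
    (f : V → ℂ) (hf : Memℓp f 2) (v : V) :
    ‖f v‖ * combLap G (fun w => ‖f w‖) v ≤ (magLap G σ f v * conj (f v)).re := by
  rw [combLap, magLap, Finset.mul_sum, Finset.sum_mul, Complex.re_sum]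
  apply Finset.sum_le_sum
  intro w hw
  have hadj : G.Adj v w := (G.mem_neighborFinset v w).mp hw
  have h1 : ((f v - σ w v * f w) * conj (f v)).re
      = ‖f v‖ ^ 2 - (σ w v * f w * conj (f v)).re := by
    rw [sub_mul, Complex.sub_re, Complex.mul_conj']
    norm_cast
  have h2 : (σ w v * f w * conj (f v)).re ≤ ‖f w‖ * ‖f v‖ := by
    calc (σ w v * f w * conj (f v)).re ≤ ‖σ w v * f w * conj (f v)‖ :=
          Complex.re_le_norm _
      _ = ‖σ w v‖ * ‖f w‖ * ‖f v‖ := by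
          rw [norm_mul, norm_mul, RCLike.norm_conj]
      _ = ‖f w‖ * ‖f v‖ := by rw [hσ1 w v hadj.symm, one_mul]
  rw [h1]
  nlinarith [norm_nonneg (f v)]
end

section
/- With notation as in the discrete Kato inequality setting, the bottom of the spectrum of the combinatorial Laplacian is at most the bottom of the spectrum of the discrete magnetic Laplacian: λ₀(Δ) ≤ λ₀(Δ_σ), where λ₀(A) = inf{ (Af, f)/‖f‖² : f ∈ C⁰₍₂₎(K), f ≠ 0 }. -/
/-!
By Kato's inequality `Re (σ f(w) conj f(v)) ≤ |f(w)| |f(v)|` for `|σ| ≤ 1`, summed over the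
neighbours of `v`, the quadratic form of `Δ` at `|f|` is bounded by that of `Δ_σ` at `f`, while
`‖ |f| ‖ = ‖f‖`; so every Rayleigh quotient of `Δ_σ` dominates one of `Δ`. Bounded valence makes
both quadratic forms absolutely summable (each `|f(w)|²` is counted at most `M` times) and bounds
the Rayleigh quotients of `Δ` below by `-3M`, so the infima can be compared.
-/

open ComplexConjugate

noncomputable def combLapC {V : Type*} (G : SimpleGraph V) [G.LocallyFinite]
    (f : V → ℂ) (v : V) : ℂ :=
  ∑ w ∈ G.neighborFinset v, (f v - f w)

noncomputable def bottomSpec {V : Type*} (L : (V → ℂ) → (V → ℂ)) : ℝ :=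
  sInf { r : ℝ | ∃ f : V → ℂ, Memℓp f 2 ∧ f ≠ 0 ∧
    r = (∑' v, (L f v * conj (f v)).re) / (∑' v, ‖f v‖ ^ 2) }

theorem Memℓp.summable_norm_sq {V E : Type*} [NormedAddCommGroup E] {f : V → E}
    (hf : Memℓp f 2) : Summable fun v => ‖f v‖ ^ 2 := by
  simpa using hf.summable (by norm_num)

section RayleighQuotient

variable {V : Type*}

noncomputable def rayleighQuotient (L : (V → ℂ) → V → ℂ) (f : V → ℂ) : ℝ :=
  (∑' v, (L f v * conj (f v)).re) / ∑' v, ‖f v‖ ^ 2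

theorem tsum_norm_sq_pos {E : Type*} [NormedAddCommGroup E] {f : V → E}
    (hf : Summable fun v => ‖f v‖ ^ 2) (hf0 : f ≠ 0) :
    0 < ∑' v, ‖f v‖ ^ 2 := by
  obtain ⟨v, hv⟩ := Function.ne_iff.1 hf0
  exact hf.tsum_pos (fun v => sq_nonneg _) v (by positivity)

theorem bottomSpec_le_bottomSpec {L L' : (V → ℂ) → V → ℂ} {c : ℝ}
    (hc : ∀ f, Memℓp f 2 → f ≠ 0 → c ≤ rayleighQuotient L f)
    (h : ∀ f, Memℓp f 2 → f ≠ 0 →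
      ∃ g, Memℓp g 2 ∧ g ≠ 0 ∧ rayleighQuotient L g ≤ rayleighQuotient L' f) :
    bottomSpec L ≤ bottomSpec L' := by
  let S : ((V → ℂ) → V → ℂ) → Set ℝ :=
    fun L => {r | ∃ f, Memℓp f 2 ∧ f ≠ 0 ∧ r = rayleighQuotient L f}
  change sInf (S L) ≤ sInf (S L')
  by_cases hV : ∃ f : V → ℂ, Memℓp f 2 ∧ f ≠ 0
  · obtain ⟨f₀, hf₀, hf₀0⟩ := hV
    have hbdd : BddBelow (S L) := ⟨c, by rintro _ ⟨f, hf, hf0, rfl⟩; exact hc f hf hf0⟩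
    refine le_csInf ⟨_, f₀, hf₀, hf₀0, rfl⟩ ?_
    rintro _ ⟨f, hf, hf0, rfl⟩
    obtain ⟨g, hg, hg0, hgf⟩ := h f hf hf0
    exact (csInf_le hbdd ⟨g, hg, hg0, rfl⟩).trans hgf
  · have hempty : ∀ L, S L = ∅ := fun L => Set.eq_empty_of_forall_notMem <| by
      rintro _ ⟨f, hf, hf0, -⟩
      exact hV ⟨f, hf, hf0⟩
    rw [hempty, hempty]

end RayleighQuotient

section BoundedDegree

variable {V : Type*} (G : SimpleGraph V) [G.LocallyFinite] {M : ℕ} {a : V → ℝ}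

theorem sum_sum_neighborFinset_le (hM : ∀ v, G.degree v ≤ M) (ha : 0 ≤ a) (hs : Summable a)
    (s : Finset V) : ∑ v ∈ s, ∑ w ∈ G.neighborFinset v, a w ≤ M * ∑' v, a v := by
  classical
  set T := s.biUnion fun v => G.neighborFinset v
  rw [Finset.sum_comm' (s' := fun w => s.filter (G.Adj w)) (t' := T) (by
    intro v w
    simp only [T, Finset.mem_filter, Finset.mem_biUnion, SimpleGraph.mem_neighborFinset]
    exact ⟨fun h => ⟨⟨h.1, h.2.symm⟩, v, h⟩, fun h => ⟨h.1.1, h.1.2.symm⟩⟩)]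
  calc _ ≤ ∑ w ∈ T, M * a w := Finset.sum_le_sum fun w _ => by
        rw [Finset.sum_const, nsmul_eq_mul]
        have hcard : (s.filter (G.Adj w)).card ≤ M := calc
          _ ≤ (G.neighborFinset w).card := Finset.card_le_card fun _ hv =>
            (G.mem_neighborFinset w _).2 (Finset.mem_filter.1 hv).2
          _ ≤ M := hM w
        exact mul_le_mul_of_nonneg_right (by exact_mod_cast hcard) (ha w)
    _ ≤ M * ∑' v, a v := by
        rw [← Finset.mul_sum]
        exact mul_le_mul_of_nonneg_left (hs.sum_le_tsum _ fun w _ => ha w) (Nat.cast_nonneg M)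

theorem summable_sum_neighborFinset (hM : ∀ v, G.degree v ≤ M) (ha : 0 ≤ a) (hs : Summable a) :
    Summable fun v => ∑ w ∈ G.neighborFinset v, a w :=
  summable_of_sum_le (fun _ => Finset.sum_nonneg fun w _ => ha w)
    (sum_sum_neighborFinset_le G hM ha hs)

theorem tsum_sum_neighborFinset_le (hM : ∀ v, G.degree v ≤ M) (ha : 0 ≤ a) (hs : Summable a) :
    ∑' v, ∑ w ∈ G.neighborFinset v, a w ≤ M * ∑' v, a v :=
  (summable_sum_neighborFinset G hM ha hs).tsum_le_of_sum_le
    (sum_sum_neighborFinset_le G hM ha hs)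

end BoundedDegree

section MagneticForm

variable {V : Type*} (G : SimpleGraph V) [G.LocallyFinite] {σ : V → V → ℂ}

theorem combLapC_eq_magLap_one : combLapC G = magLap G fun _ _ => 1 := by
  ext f v
  simp [combLapC, magLap]

theorem re_magLap_mul_conj (f : V → ℂ) (v : V) :
    (magLap G σ f v * conj (f v)).re
      = ∑ w ∈ G.neighborFinset v, (‖f v‖ ^ 2 - (σ w v * f w * conj (f v)).re) := by
  simp only [magLap, Finset.sum_mul, Complex.re_sum, sub_mul, Complex.sub_re,
    Complex.mul_conj', ← Complex.ofReal_pow, Complex.ofReal_re]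

theorem abs_re_mul_mul_conj_le {s x y : ℂ} (hs : ‖s‖ ≤ 1) :
    |(s * x * conj y).re| ≤ ‖x‖ * ‖y‖ := calc
  _ ≤ ‖s * x * conj y‖ := Complex.abs_re_le_norm _
  _ = ‖s‖ * (‖x‖ * ‖y‖) := by rw [norm_mul, norm_mul, RCLike.norm_conj, mul_assoc]
  _ ≤ ‖x‖ * ‖y‖ := mul_le_of_le_one_left (by positivity) hs

theorem abs_re_magLap_mul_conj_le {M : ℕ} (hM : ∀ v, G.degree v ≤ M)
    (hσ : ∀ u v, G.Adj u v → ‖σ u v‖ ≤ 1) (f : V → ℂ) (v : V) :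
    |(magLap G σ f v * conj (f v)).re|
      ≤ 2 * M * ‖f v‖ ^ 2 + ∑ w ∈ G.neighborFinset v, ‖f w‖ ^ 2 := by
  have hterm : ∀ w ∈ G.neighborFinset v,
      |‖f v‖ ^ 2 - (σ w v * f w * conj (f v)).re| ≤ 2 * ‖f v‖ ^ 2 + ‖f w‖ ^ 2 := by
    intro w hw
    have h := abs_le.1 <| abs_re_mul_mul_conj_le (x := f w) (y := f v)
      (hσ w v ((G.mem_neighborFinset v w).1 hw).symm)
    rw [abs_le]
    constructor <;> nlinarith [sq_nonneg (‖f w‖ - ‖f v‖), norm_nonneg (f v), norm_nonneg (f w)]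
  calc _ ≤ ∑ w ∈ G.neighborFinset v, (2 * ‖f v‖ ^ 2 + ‖f w‖ ^ 2) := by
        rw [re_magLap_mul_conj]
        exact (Finset.abs_sum_le_sum_abs _ _).trans (Finset.sum_le_sum hterm)
    _ = G.degree v * (2 * ‖f v‖ ^ 2) + ∑ w ∈ G.neighborFinset v, ‖f w‖ ^ 2 := by
        rw [Finset.sum_add_distrib, Finset.sum_const, nsmul_eq_mul, G.card_neighborFinset_eq_degree]
    _ ≤ _ := by
        have : (G.degree v : ℝ) ≤ M := by exact_mod_cast hM v
        nlinarith [sq_nonneg ‖f v‖]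

theorem summable_re_magLap_mul_conj {M : ℕ} (hM : ∀ v, G.degree v ≤ M)
    (hσ : ∀ u v, G.Adj u v → ‖σ u v‖ ≤ 1) {f : V → ℂ} (hf : Summable fun v => ‖f v‖ ^ 2) :
    Summable fun v => (magLap G σ f v * conj (f v)).re :=
  Summable.of_norm_bounded ((hf.mul_left _).add <| summable_sum_neighborFinset G hM
    (fun v => sq_nonneg ‖f v‖) hf) (abs_re_magLap_mul_conj_le G hM hσ f)

theorem neg_le_tsum_re_magLap_mul_conj {M : ℕ} (hM : ∀ v, G.degree v ≤ M)
    (hσ : ∀ u v, G.Adj u v → ‖σ u v‖ ≤ 1) {f : V → ℂ} (hf : Summable fun v => ‖f v‖ ^ 2) :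
    -(3 * M * ∑' v, ‖f v‖ ^ 2) ≤ ∑' v, (magLap G σ f v * conj (f v)).re := by
  have hnb := summable_sum_neighborFinset G hM (fun v => sq_nonneg ‖f v‖) hf
  calc -(3 * M * ∑' v, ‖f v‖ ^ 2)
      ≤ -(2 * M * ∑' v, ‖f v‖ ^ 2 + ∑' v, ∑ w ∈ G.neighborFinset v, ‖f w‖ ^ 2) := by
        linarith [tsum_sum_neighborFinset_le G hM (fun v => sq_nonneg ‖f v‖) hf]
    _ = ∑' v, -(2 * M * ‖f v‖ ^ 2 + ∑ w ∈ G.neighborFinset v, ‖f w‖ ^ 2) := by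
        rw [tsum_neg, (hf.mul_left _).tsum_add hnb, tsum_mul_left]
    _ ≤ _ := ((hf.mul_left _).add hnb).neg.tsum_le_tsum
        (fun v => (abs_le.1 (abs_re_magLap_mul_conj_le G hM hσ f v)).1)
        (summable_re_magLap_mul_conj G hM hσ hf)

theorem re_combLapC_norm_mul_le (hσ : ∀ u v, G.Adj u v → ‖σ u v‖ ≤ 1) (f : V → ℂ) (v : V) :
    (combLapC G (fun v => (‖f v‖ : ℂ)) v * conj (‖f v‖ : ℂ)).re
      ≤ (magLap G σ f v * conj (f v)).re := by
  rw [combLapC_eq_magLap_one, re_magLap_mul_conj, re_magLap_mul_conj]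
  refine Finset.sum_le_sum fun w hw => ?_
  have h := abs_le.1 <| abs_re_mul_mul_conj_le (x := f w) (y := f v)
    (hσ w v ((G.mem_neighborFinset v w).1 hw).symm)
  simp only [one_mul, Complex.conj_ofReal, ← Complex.ofReal_mul, Complex.ofReal_re,
    Complex.norm_real, Real.norm_eq_abs, abs_norm]
  linarith

theorem rayleighQuotient_combLapC_norm_le {M : ℕ} (hM : ∀ v, G.degree v ≤ M)
    (hσ : ∀ u v, G.Adj u v → ‖σ u v‖ ≤ 1) {f : V → ℂ} (hf : Summable fun v => ‖f v‖ ^ 2) :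
    rayleighQuotient (combLapC G) (fun v => (‖f v‖ : ℂ)) ≤ rayleighQuotient (magLap G σ) f := by
  have hnorm : ∀ v, ‖(‖f v‖ : ℂ)‖ = ‖f v‖ := fun v => by simp
  have hone : ∀ u v : V, G.Adj u v → ‖(1 : ℂ)‖ ≤ 1 := fun _ _ _ => norm_one.le
  have hf' : Summable fun v => ‖(‖f v‖ : ℂ)‖ ^ 2 := by simpa only [hnorm] using hf
  have hnum : ∑' v, (combLapC G (fun v => (‖f v‖ : ℂ)) v * conj (‖f v‖ : ℂ)).re
      ≤ ∑' v, (magLap G σ f v * conj (f v)).re := by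
    refine Summable.tsum_le_tsum (re_combLapC_norm_mul_le G hσ f) ?_
      (summable_re_magLap_mul_conj G hM hσ hf)
    rw [combLapC_eq_magLap_one]
    exact summable_re_magLap_mul_conj G hM hone hf'
  rw [rayleighQuotient, rayleighQuotient, tsum_congr fun v => congrArg (· ^ 2) (hnorm v)]
  exact div_le_div_of_nonneg_right hnum (tsum_nonneg fun v => sq_nonneg ‖f v‖)

theorem neg_le_rayleighQuotient_magLap {M : ℕ} (hM : ∀ v, G.degree v ≤ M)
    (hσ : ∀ u v, G.Adj u v → ‖σ u v‖ ≤ 1) {f : V → ℂ} (hf : Memℓp f 2) (hf0 : f ≠ 0) :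
    -(3 * M : ℝ) ≤ rayleighQuotient (magLap G σ) f := by
  rw [rayleighQuotient, le_div_iff₀ (tsum_norm_sq_pos hf.summable_norm_sq hf0)]
  linarith [neg_le_tsum_re_magLap_mul_conj G hM hσ hf.summable_norm_sq]

end MagneticForm

theorem bottomSpec_lap_le_bottomSpec_magLap_general {V : Type*} (G : SimpleGraph V)
    [G.LocallyFinite] (M : ℕ) (hM : ∀ v, G.degree v ≤ M)
    (σ : V → V → ℂ) (hσ1 : ∀ u v, G.Adj u v → ‖σ u v‖ = 1) :
    bottomSpec (combLapC G) ≤ bottomSpec (magLap G σ) := by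
  have hσ : ∀ u v, G.Adj u v → ‖σ u v‖ ≤ 1 := fun u v h => (hσ1 u v h).le
  refine bottomSpec_le_bottomSpec (c := -(3 * M)) (fun f hf hf0 => ?_) fun f hf hf0 =>
    ⟨fun v => (‖f v‖ : ℂ), hf.mono' fun v => by simp, by simpa [funext_iff] using hf0,
      rayleighQuotient_combLapC_norm_le G hM hσ hf.summable_norm_sq⟩
  rw [combLapC_eq_magLap_one]
  exact neg_le_rayleighQuotient_magLap G hM (fun _ _ _ => norm_one.le) hf hf0

/-- The bottom of the spectrum of the combinatorial Laplacian is at most the bottom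
of the spectrum of the discrete magnetic Laplacian: `λ₀(Δ) ≤ λ₀(Δ_σ)`. -/
theorem bottomSpec_lap_le_bottomSpec_magLap {V : Type*} (G : SimpleGraph V)
    [G.LocallyFinite] (M : ℕ) (hM : ∀ v, G.degree v ≤ M)
    (σ : V → V → ℂ) (hσ1 : ∀ u v, G.Adj u v → ‖σ u v‖ = 1)
    (hσ2 : ∀ u v, G.Adj u v → σ u v = conj (σ v u)) :
    bottomSpec (combLapC G) ≤ bottomSpec (magLap G σ) :=
  bottomSpec_lap_le_bottomSpec_magLap_general G M hM σ hσ1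
end

section
/- Let K be a graph of bounded valence, Δ the combinatorial Laplacian and Δ_σ the discrete magnetic Laplacian for a multiplier σ. For every t > 0 and every f ∈ C⁰₍₂₎(K), the heat semigroup domination |e^{-tΔ_σ} f| ≤ e^{-tΔ} |f| holds pointwise on vertices. In particular, for every vertex v and t > 0, the diagonal heat kernels satisfy p_t^σ(v,v) ≤ p_t(v,v), where p_t(v,w) = (e^{-tΔ}δ_v, δ_w) and p_t^σ(v,w) = (e^{-tΔ_σ}δ_v, δ_w). -/
open ComplexConjugate

/-!
Let `m` bound the degrees. Then `m - Δ_σ` acts by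
`f ↦ (m - deg v) f(v) + ∑_{w ~ v} σ(w,v) f(w)`, whose coefficients have moduli equal to the
nonnegative coefficients of `m - Δ`; hence `|(m - Δ_σ)ⁿ f| ≤ (m - Δ)ⁿ |f|` for every `n`. The
exponential series has nonnegative coefficients, so `|e^{t(m - Δ_σ)} f| ≤ e^{t(m - Δ)} |f|`,
and multiplying by `e^{-tm}` gives `|e^{-tΔ_σ} f| ≤ e^{-tΔ} |f|`. The heat-kernel inequality is
the case `f = δ_v`, since `Re z ≤ |z|`.
-/

open scoped ComplexOrder ENNReal Nat

theorem Complex.ofReal_norm_le_of_hasSum {ι : Type*} {a b : ι → ℂ} {A B : ℂ}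
    (ha : HasSum a A) (hb : HasSum b B) (hab : ∀ i, (‖a i‖ : ℂ) ≤ b i) : (‖A‖ : ℂ) ≤ B := by
  have hre : ∀ i, ‖a i‖ ≤ (b i).re := fun i => by simpa using (Complex.le_def.1 (hab i)).1
  have hnorm : Summable fun i => ‖a i‖ :=
    .of_nonneg_of_le (fun _ => norm_nonneg _) hre (Complex.hasSum_re hb).summable
  calc (‖A‖ : ℂ) ≤ ((∑' i, ‖a i‖ : ℝ) : ℂ) := by
        rw [Complex.real_le_real, ← ha.tsum_eq]; exact norm_tsum_le_tsum_norm hnorm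
    _ ≤ B := hasSum_le hab (Complex.hasSum_ofReal.mpr hnorm.hasSum) hb

theorem NormedSpace.exp_smul_one_add {𝔸 : Type*} [NormedRing 𝔸] [NormedAlgebra ℂ 𝔸]
    [CompleteSpace 𝔸] (c : ℂ) (a : 𝔸) :
    NormedSpace.exp (c • 1 + a) = Complex.exp c • NormedSpace.exp a := by
  have hball : ∀ x : 𝔸, x ∈ Metric.eball 0 (NormedSpace.expSeries ℂ 𝔸).radius := fun _ =>
    (NormedSpace.expSeries_radius_eq_top ℂ 𝔸).symm ▸ edist_lt_top _ _
  rw [NormedSpace.exp_add_of_commute_of_mem_ball ((Commute.one_left a).smul_left c) (hball _)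
      (hball _),
    ← Algebra.algebraMap_eq_smul_one, ← NormedSpace.algebraMap_exp_comm, Complex.exp_eq_exp_ℂ,
    Algebra.algebraMap_eq_smul_one, smul_one_mul]

section Domination

variable {V : Type*} {p : ℝ≥0∞} [Fact (1 ≤ p)]

local notation "H" => lp (fun _ : V => ℂ) p

theorem lp.hasSum_exp_apply (S : H →L[ℂ] H) (f : H) (v : V) :
    HasSum (fun n => (((n ! : ℂ)⁻¹ • S ^ n) f) v) (NormedSpace.exp S f v) :=
  (NormedSpace.exp_series_hasSum_exp' (𝕂 := ℂ) S).mapL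
    ((lp.evalCLM ℂ (fun _ : V => ℂ) p v).comp (ContinuousLinearMap.apply ℂ H f))

/-- In `ComplexOrder`, `(‖f v‖ : ℂ) ≤ g v` says that `g v` is real and at least `‖f v‖`. -/
def Dominates (g f : V → ℂ) : Prop := ∀ v, (‖f v‖ : ℂ) ≤ g v

theorem Dominates.norm_le_re {g f : V → ℂ} (h : Dominates g f) (v : V) : ‖f v‖ ≤ (g v).re := by
  simpa using (Complex.le_def.1 (h v)).1

theorem dominates_self_of_nonneg {g : V → ℂ} (hg : 0 ≤ g) : Dominates g g := fun v => by
  rw [Complex.norm_of_nonneg' (hg v)]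

def DominatesCLM (T S : H →L[ℂ] H) : Prop :=
  ∀ f g : H, Dominates g f → Dominates (T g) (S f)

namespace DominatesCLM

variable {T S T' S' : lp (fun _ : V => ℂ) p →L[ℂ] lp (fun _ : V => ℂ) p}

theorem one : DominatesCLM (1 : H →L[ℂ] H) 1 := fun _ _ h => h

theorem mul (h : DominatesCLM T S) (h' : DominatesCLM T' S') : DominatesCLM (T * T') (S * S') :=
  fun _ _ hfg => h _ _ (h' _ _ hfg)

theorem pow (h : DominatesCLM T S) (n : ℕ) : DominatesCLM (T ^ n) (S ^ n) := by
  induction n with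
  | zero => exact one
  | succ n ih => rw [pow_succ, pow_succ]; exact ih.mul h

theorem smul_of_nonneg (h : DominatesCLM T S) {c : ℂ} (hc : 0 ≤ c) :
    DominatesCLM (c • T) (c • S) := fun f g hfg v => by
  simp only [smul_apply, lp.coeFn_smul, Pi.smul_apply, smul_eq_mul, norm_mul,
    Complex.ofReal_mul, Complex.norm_of_nonneg' hc]
  exact mul_le_mul_of_nonneg_left (h f g hfg v) hc

theorem exp (h : DominatesCLM T S) :
    DominatesCLM (NormedSpace.exp T) (NormedSpace.exp S) := fun f g hfg v =>
  Complex.ofReal_norm_le_of_hasSum (lp.hasSum_exp_apply S f v) (lp.hasSum_exp_apply T g v)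
    fun n => (h.pow n).smul_of_nonneg (by positivity) f g hfg v

theorem exp_neg_smul {A Aσ : H →L[ℂ] H} {m : ℝ}
    (h : DominatesCLM ((m : ℂ) • 1 - A) ((m : ℂ) • 1 - Aσ)) {t : ℝ} (ht : 0 ≤ t) :
    DominatesCLM (NormedSpace.exp (-(t : ℂ) • A)) (NormedSpace.exp (-(t : ℂ) • Aσ)) := by
  have hshift : ∀ B : H →L[ℂ] H, NormedSpace.exp (-(t : ℂ) • B) =
      ((Real.exp (-(t * m)) : ℝ) : ℂ) • NormedSpace.exp ((t : ℂ) • ((m : ℂ) • 1 - B)) := fun B => by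
    rw [Complex.ofReal_exp, ← NormedSpace.exp_smul_one_add]
    congr 1
    push_cast
    module
  rw [hshift, hshift]
  exact ((h.smul_of_nonneg (Complex.zero_le_real.2 ht)).exp).smul_of_nonneg
    (Complex.zero_le_real.2 (Real.exp_nonneg _))

end DominatesCLM

end Domination

theorem combLapC_eq_magLap_one_s5 {V : Type*} (G : SimpleGraph V) [G.LocallyFinite] :
    combLapC G = magLap G 1 := by
  ext f v
  simp [combLapC, magLap]

theorem smul_one_sub_apply_of_magLap {V : Type*} {p : ℝ≥0∞} [Fact (1 ≤ p)]
    (G : SimpleGraph V) [G.LocallyFinite] (σ : V → V → ℂ) {Aσ : lp (fun _ : V => ℂ) p →L[ℂ] lp (fun _ : V => ℂ) p}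
    (hAσ : ∀ f v, Aσ f v = magLap G σ f v) (m : ℂ) (f : lp (fun _ : V => ℂ) p) (v : V) :
    ((m • 1 - Aσ) f) v = (m - G.degree v) * f v + ∑ w ∈ G.neighborFinset v, σ w v * f w := by
  rw [sub_apply, smul_apply, one_apply_eq_self, lp.coeFn_sub, lp.coeFn_smul, Pi.sub_apply,
    Pi.smul_apply, smul_eq_mul, hAσ, magLap, Finset.sum_sub_distrib, Finset.sum_const,
    SimpleGraph.card_neighborFinset_eq_degree, nsmul_eq_mul]
  ring

theorem dominatesCLM_smul_one_sub_of_magLap {V : Type*} {p : ℝ≥0∞} [Fact (1 ≤ p)]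
    (G : SimpleGraph V) [G.LocallyFinite] {M : ℝ} (hM : ∀ v, (G.degree v : ℝ) ≤ M)
    {σ : V → V → ℂ} (hσ : ∀ u v, G.Adj u v → ‖σ u v‖ = 1)
    {A Aσ : lp (fun _ : V => ℂ) p →L[ℂ] lp (fun _ : V => ℂ) p}
    (hA : ∀ f v, A f v = combLapC G f v) (hAσ : ∀ f v, Aσ f v = magLap G σ f v) :
    DominatesCLM ((M : ℂ) • 1 - A) ((M : ℂ) • 1 - Aσ) := by
  intro f g hfg v
  rw [smul_one_sub_apply_of_magLap G σ hAσ,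
    smul_one_sub_apply_of_magLap G 1 (by simpa [combLapC_eq_magLap_one_s5] using hA)]
  have hd : (0 : ℂ) ≤ M - G.degree v := by exact_mod_cast sub_nonneg.2 (hM v)
  calc (‖(M - G.degree v) * f v + ∑ w ∈ G.neighborFinset v, σ w v * f w‖ : ℂ)
      ≤ ((‖(M - G.degree v : ℂ) * f v‖ + ∑ w ∈ G.neighborFinset v, ‖σ w v * f w‖ : ℝ) : ℂ) := by
        rw [Complex.real_le_real]
        exact (norm_add_le _ _).trans (by gcongr; exact norm_sum_le _ _)
    _ = (M - G.degree v) * ‖f v‖ + ∑ w ∈ G.neighborFinset v, (‖f w‖ : ℂ) := by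
        push_cast
        rw [norm_mul, Complex.ofReal_mul, Complex.norm_of_nonneg' hd]
        congr 1
        refine Finset.sum_congr rfl fun w hw => ?_
        rw [norm_mul, hσ w v (G.adj_symm ((G.mem_neighborFinset v w).1 hw)), one_mul]
    _ ≤ (M - G.degree v) * g v + ∑ w ∈ G.neighborFinset v, (1 : V → V → ℂ) w v * g w := by
        simp only [Pi.one_apply, one_mul]
        gcongr with w
        exacts [hfg v, hfg w]

theorem heat_semigroup_domination_general {V : Type*} [DecidableEq V] (G : SimpleGraph V)
    [G.LocallyFinite] (M : ℕ) (hM : ∀ v, G.degree v ≤ M)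
    (σ : V → V → ℂ) (hσ1 : ∀ u v, G.Adj u v → ‖σ u v‖ = 1)
    (A Aσ : lp (fun _ : V => ℂ) 2 →L[ℂ] lp (fun _ : V => ℂ) 2)
    (hA : ∀ (f : lp (fun _ : V => ℂ) 2) (v : V), A f v = combLapC G (⇑f) v)
    (hAσ : ∀ (f : lp (fun _ : V => ℂ) 2) (v : V), Aσ f v = magLap G σ (⇑f) v)
    (t : ℝ) (ht : 0 < t) :
    (∀ f g : lp (fun _ : V => ℂ) 2, (∀ v, g v = (‖f v‖ : ℂ)) →
      ∀ v, ‖NormedSpace.exp (-(t : ℂ) • Aσ) f v‖ ≤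
        (NormedSpace.exp (-(t : ℂ) • A) g v).re) ∧
    (∀ v : V, (NormedSpace.exp (-(t : ℂ) • Aσ) (lp.single 2 v 1) v).re ≤
      (NormedSpace.exp (-(t : ℂ) • A) (lp.single 2 v 1) v).re) := by
  have hshift : DominatesCLM (((M : ℝ) : ℂ) • 1 - A) (((M : ℝ) : ℂ) • 1 - Aσ) :=
    dominatesCLM_smul_one_sub_of_magLap G (fun v => by exact_mod_cast hM v) hσ1 hA hAσ
  have hheat := hshift.exp_neg_smul ht.le
  refine ⟨fun f g hfg v => (hheat f g fun w => (hfg w).ge).norm_le_re v, fun v => ?_⟩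
  have hδ : 0 ≤ ⇑(lp.single (E := fun _ : V => ℂ) 2 v 1) := by
    rw [lp.coeFn_single]
    exact Pi.single_nonneg.2 zero_le_one
  exact (Complex.re_le_norm _).trans ((hheat _ _ (dominates_self_of_nonneg hδ)).norm_le_re v)

/-- Heat semigroup domination: for `t > 0`, `|e^{-tΔ_σ} f| ≤ e^{-tΔ} |f|` pointwise
(where `g = |f|`), and in particular for the diagonal heat kernels
`p_t^σ(v,v) ≤ p_t(v,v)`, with `p_t(v,w) = (e^{-tΔ} δ_v, δ_w)`. -/
theorem heat_semigroup_domination {V : Type*} [DecidableEq V] (G : SimpleGraph V)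
    [G.LocallyFinite] (M : ℕ) (hM : ∀ v, G.degree v ≤ M)
    (σ : V → V → ℂ) (hσ1 : ∀ u v, G.Adj u v → ‖σ u v‖ = 1)
    (hσ2 : ∀ u v, G.Adj u v → σ u v = conj (σ v u))
    (A Aσ : lp (fun _ : V => ℂ) 2 →L[ℂ] lp (fun _ : V => ℂ) 2)
    (hA : ∀ (f : lp (fun _ : V => ℂ) 2) (v : V), A f v = combLapC G (⇑f) v)
    (hAσ : ∀ (f : lp (fun _ : V => ℂ) 2) (v : V), Aσ f v = magLap G σ (⇑f) v)
    (t : ℝ) (ht : 0 < t) :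
    (∀ f g : lp (fun _ : V => ℂ) 2, (∀ v, g v = (‖f v‖ : ℂ)) →
      ∀ v, ‖NormedSpace.exp (-(t : ℂ) • Aσ) f v‖ ≤
        (NormedSpace.exp (-(t : ℂ) • A) g v).re) ∧
    (∀ v : V, (NormedSpace.exp (-(t : ℂ) • Aσ) (lp.single 2 v 1) v).re ≤
      (NormedSpace.exp (-(t : ℂ) • A) (lp.single 2 v 1) v).re) :=
  heat_semigroup_domination_general G M hM σ hσ1 A Aσ hA hAσ t ht
end

section
/- Uniqueness of the fundamental solution of the heat equation on graphs: Let K be a graph of bounded valence and fix a vertex y. Then the function (x,t) ↦ p_t(x,y) = (e^{-tΔ}δ_x, δ_y) is the unique bounded nonnegative function v(x,t) on K × [0,∞), differentiable in t, satisfying Δ_x v + ∂v/∂t = 0 for all x and t > 0 and the initial condition v(x,0) = δ_y(x). -/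
/-!
The heat kernel `p_t = e^{-tΔ} δ_y` solves the heat equation because `Δ` is bounded. It takes
values in `[0, 1]`: writing `e^{-tΔ} = e^{-tM} e^{t(M - Δ)}`, the operator `M - Δ` maps functions
with values in `[0, b]` to functions with values in `[0, M b]` (valences are at most `M`), so the
`n`-th term of the exponential series of `e^{t(M - Δ)} δ_y` lies in `[0, (tM)^n / n!]`.

For uniqueness, the difference `u` of two bounded solutions vanishes at `t = 0`, and
`|Δf| ≤ 2M sup |f|`. Integrating the equation `n` times gives `|u(x,t)| ≤ C (2Mt)^n / n!`,
which tends to `0`.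
-/

open Set Filter NormedSpace
open scoped Nat ENNReal

theorem abs_le_of_abs_deriv_le_deriv {f f' g g' : ℝ → ℝ} {a : ℝ}
    (hf : ContinuousOn f (Ici a)) (hg : ContinuousOn g (Ici a))
    (hf' : ∀ t, a < t → HasDerivAt f (f' t) t) (hg' : ∀ t, a < t → HasDerivAt g (g' t) t)
    (hderiv : ∀ t, a < t → |f' t| ≤ g' t) (ha : |f a| ≤ g a) {t : ℝ} (ht : a ≤ t) :
    |f t| ≤ g t := by
  have mono (σ : ℝ) (hσ : |σ| = 1) : MonotoneOn (fun s => g s - σ * f s) (Ici a) := by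
    have hd : ∀ s, a < s → HasDerivAt (fun s => g s - σ * f s) (g' s - σ * f' s) s :=
      fun s hs => (hg' s hs).sub ((hf' s hs).const_mul σ)
    refine monotoneOn_of_deriv_nonneg (convex_Ici a) (hg.sub (hf.const_smul σ)) ?_ ?_ <;>
      rw [interior_Ici]
    · exact fun s hs => (hd s hs).differentiableAt.differentiableWithinAt
    · intro s hs
      rw [(hd s hs).deriv, sub_nonneg]
      calc σ * f' s ≤ |σ * f' s| := le_abs_self _
        _ = |f' s| := by rw [abs_mul, hσ, one_mul]
        _ ≤ g' s := hderiv s hs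
  have h₁ := mono 1 abs_one self_mem_Ici ht ht
  have h₂ := mono (-1) (by simp) self_mem_Ici ht ht
  simp only at h₁ h₂
  rw [abs_le] at ha ⊢
  constructor <;> linarith

theorem hasDerivAt_pow_succ_div_factorial (K t : ℝ) (n : ℕ) :
    HasDerivAt (fun s => (K * s) ^ (n + 1) / (n + 1)!) (K * ((K * t) ^ n / n !)) t := by
  refine ((((hasDerivAt_id t).const_mul K).pow (n + 1)).div_const ((n + 1)! : ℝ)).congr_deriv ?_
  rw [Nat.factorial_succ]
  push_cast
  field_simp
  simp

theorem exp_eq_smul_exp_add_algebraMap {𝔸 : Type*} [NormedRing 𝔸] [NormedAlgebra ℝ 𝔸]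
    [CompleteSpace 𝔸] (a : 𝔸) (c : ℝ) :
    exp a = Real.exp (-c) • exp (a + algebraMap ℝ 𝔸 c) := by
  let +nondep : NormedAlgebra ℚ 𝔸 := .restrictScalars ℚ ℝ 𝔸
  rw [exp_add_of_commute (Algebra.commutes c a).symm, ← algebraMap_exp_comm, ← Real.exp_eq_exp_ℝ,
    ← Algebra.commutes, ← Algebra.smul_def, smul_smul, ← Real.exp_add, neg_add_cancel,
    Real.exp_zero, one_smul]

section Semigroup

variable {E : Type*} [NormedAddCommGroup E] [NormedSpace ℝ E] [CompleteSpace E]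

theorem hasDerivAt_exp_neg_smul_apply (A : E →L[ℝ] E) (g : E) (t : ℝ) :
    HasDerivAt (fun s : ℝ => exp (-s • A) g) (-A (exp (-t • A) g)) t := by
  have h := (hasDerivAt_exp_smul_const' (𝕂 := ℝ) A (-t)).scomp t (hasDerivAt_neg t)
  simpa [Function.comp_def, neg_smul] using
    ((ContinuousLinearMap.apply ℝ E g).hasFDerivAt.comp_hasDerivAt t h)

theorem hasSum_exp_smul_apply (L : E →L[ℝ] ℝ) (B : E →L[ℝ] E) (g : E) (t : ℝ) :
    HasSum (fun n : ℕ => t ^ n / n ! * L ((B ^ n) g)) (L (exp (t • B) g)) := by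
  have h := (L.comp (ContinuousLinearMap.apply ℝ E g)).hasSum
    (exp_series_hasSum_exp' (𝕂 := ℝ) (t • B))
  simp only [ContinuousLinearMap.comp_apply, ContinuousLinearMap.apply_apply] at h
  convert h using 2 with n
  simp [smul_pow, div_eq_inv_mul, mul_assoc]

end Semigroup

section Positivity

variable {V : Type*} {p : ℝ≥0∞} [Fact (1 ≤ p)] {B : lp (fun _ : V => ℝ) p →L[ℝ] lp (fun _ : V => ℝ) p}
  {c : ℝ} {g : lp (fun _ : V => ℝ) p}

theorem pow_apply_mem_Icc (hB : ∀ f b, (∀ z, f z ∈ Icc 0 b) → ∀ z, B f z ∈ Icc 0 (c * b))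
    (hg : ∀ z, g z ∈ Icc 0 1) (n : ℕ) (z : V) : (B ^ n) g z ∈ Icc 0 (c ^ n) := by
  induction n generalizing z with
  | zero => simpa using hg z
  | succ n ih => simpa [pow_succ', mul_comm] using hB _ _ ih z

theorem exp_smul_apply_mem_Icc (hB : ∀ f b, (∀ z, f z ∈ Icc 0 b) → ∀ z, B f z ∈ Icc 0 (c * b))
    (hg : ∀ z, g z ∈ Icc 0 1) {t : ℝ} (ht : 0 ≤ t) (x : V) :
    exp (t • B) g x ∈ Icc 0 (Real.exp (t * c)) := by
  have hsum := hasSum_exp_smul_apply (lp.evalCLM ℝ (fun _ : V => ℝ) p x) B g t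
  have hexp : HasSum (fun n : ℕ => t ^ n / n ! * c ^ n) (Real.exp (t * c)) := by
    simpa [Real.exp_eq_exp_ℝ, mul_pow, div_mul_eq_mul_div] using
      expSeries_div_hasSum_exp (t * c)
  have hterm := fun n => pow_apply_mem_Icc hB hg n x
  exact ⟨hsum.nonneg fun n => mul_nonneg (by positivity) (hterm n).1,
    hasSum_le (fun n => mul_le_mul_of_nonneg_left (hterm n).2 (by positivity)) hsum hexp⟩

end Positivity

section Laplacian

variable {V : Type*} (G : SimpleGraph V) [G.LocallyFinite]

theorem combLap_sub (f g : V → ℝ) (x : V) :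
    combLap G (f - g) x = combLap G f x - combLap G g x := by
  simp only [combLap, Pi.sub_apply, ← Finset.sum_sub_distrib]
  exact Finset.sum_congr rfl fun _ _ => by ring

variable {G} {M : ℕ}

theorem abs_combLap_le (hM : ∀ v, G.degree v ≤ M) {f : V → ℝ} {b : ℝ} (hb : ∀ z, |f z| ≤ b)
    (x : V) : |combLap G f x| ≤ 2 * M * b := by
  have hb₀ : 0 ≤ b := (abs_nonneg _).trans (hb x)
  calc |combLap G f x| ≤ ∑ w ∈ G.neighborFinset x, |f x - f w| := Finset.abs_sum_le_sum_abs _ _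
    _ ≤ ∑ w ∈ G.neighborFinset x, 2 * b :=
        Finset.sum_le_sum fun w _ => (abs_sub _ _).trans (by linarith [hb x, hb w])
    _ = G.degree x * (2 * b) := by simp [G.card_neighborFinset_eq_degree]
    _ ≤ M * (2 * b) := by gcongr; exact_mod_cast hM x
    _ = 2 * M * b := by ring

variable {p : ℝ≥0∞} [Fact (1 ≤ p)] {A : lp (fun _ : V => ℝ) p →L[ℝ] lp (fun _ : V => ℝ) p}

theorem algebraMap_sub_apply (hA : ∀ f v, A f v = combLap G f v) (f : lp (fun _ : V => ℝ) p)
    (z : V) :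
    (algebraMap ℝ _ (M : ℝ) - A) f z = (M - G.degree z) * f z + ∑ w ∈ G.neighborFinset z, f w := by
  change (M : ℝ) * f z - A f z = _
  rw [hA, combLap, Finset.sum_sub_distrib, Finset.sum_const, G.card_neighborFinset_eq_degree,
    nsmul_eq_mul]
  ring

theorem algebraMap_sub_apply_mem_Icc (hM : ∀ v, G.degree v ≤ M)
    (hA : ∀ f v, A f v = combLap G f v) (f : lp (fun _ : V => ℝ) p) (b : ℝ)
    (hf : ∀ z, f z ∈ Icc 0 b) (z : V) : (algebraMap ℝ _ (M : ℝ) - A) f z ∈ Icc 0 (M * b) := by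
  have hdeg : (G.degree z : ℝ) ≤ M := by exact_mod_cast hM z
  rw [algebraMap_sub_apply hA]
  constructor
  · have hfz := (hf z).1
    have hsum : 0 ≤ ∑ w ∈ G.neighborFinset z, f w := Finset.sum_nonneg fun w _ => (hf w).1
    nlinarith
  · calc (M - G.degree z) * f z + ∑ w ∈ G.neighborFinset z, f w
        ≤ (M - G.degree z) * b + ∑ w ∈ G.neighborFinset z, b := by
          gcongr with w hw
          · exact (hf z).2
          · exact (hf w).2
      _ = M * b := by simp [G.card_neighborFinset_eq_degree]; ring

theorem exp_neg_smul_apply_mem_Icc (hM : ∀ v, G.degree v ≤ M)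
    (hA : ∀ f v, A f v = combLap G f v) {g : lp (fun _ : V => ℝ) p} (hg : ∀ z, g z ∈ Icc 0 1)
    {t : ℝ} (ht : 0 ≤ t) (x : V) : exp (-t • A) g x ∈ Icc 0 1 := by
  have hshift : -t • A + algebraMap ℝ _ (t * M) = t • (algebraMap ℝ _ (M : ℝ) - A) := by
    rw [smul_sub, map_mul, ← Algebra.smul_def, neg_smul]
    abel
  obtain ⟨h₀, h₁⟩ := exp_smul_apply_mem_Icc (algebraMap_sub_apply_mem_Icc hM hA) hg ht x
  rw [exp_eq_smul_exp_add_algebraMap _ (t * M), hshift]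
  simp only [smul_apply, lp.coeFn_smul, Pi.smul_apply, smul_eq_mul]
  refine ⟨by positivity, ?_⟩
  calc Real.exp (-(t * M)) * exp (t • (algebraMap ℝ _ (M : ℝ) - A)) g x
      ≤ Real.exp (-(t * M)) * Real.exp (t * M) := by gcongr
    _ = 1 := by rw [← Real.exp_add, neg_add_cancel, Real.exp_zero]

end Laplacian

section HeatEquation

variable {V : Type*} (G : SimpleGraph V) [G.LocallyFinite]

structure IsHeatSolution (u : V → ℝ → ℝ) : Prop where
  continuousOn : ∀ x, ContinuousOn (u x) (Ici 0)
  hasDerivAt : ∀ x, ∀ t : ℝ, 0 < t → HasDerivAt (u x) (-combLap G (fun z => u z t) x) t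

variable {G}

theorem IsHeatSolution.sub {u v : V → ℝ → ℝ} (hu : IsHeatSolution G u)
    (hv : IsHeatSolution G v) : IsHeatSolution G (u - v) where
  continuousOn x := (hu.continuousOn x).sub (hv.continuousOn x)
  hasDerivAt x t ht := ((hu.hasDerivAt x t ht).sub (hv.hasDerivAt x t ht)).congr_deriv <| by
    show _ = -combLap G ((fun z => u z t) - fun z => v z t) x
    rw [combLap_sub]
    ring

theorem isHeatSolution_exp_neg_smul_apply {p : ℝ≥0∞} [Fact (1 ≤ p)]
    {A : lp (fun _ : V => ℝ) p →L[ℝ] lp (fun _ : V => ℝ) p}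
    (hA : ∀ f v, A f v = combLap G f v) (g : lp (fun _ : V => ℝ) p) :
    IsHeatSolution G (fun x t => exp (-t • A) g x) := by
  have hderiv (x : V) (t : ℝ) : HasDerivAt (fun s : ℝ => exp (-s • A) g x)
      (-combLap G (fun z => exp (-t • A) g z) x) t := by
    rw [← hA]
    exact (lp.evalCLM ℝ (fun _ : V => ℝ) p x).hasFDerivAt.comp_hasDerivAt t
      (hasDerivAt_exp_neg_smul_apply A g t)
  exact ⟨fun x => (continuous_iff_continuousAt.2 fun t => (hderiv x t).continuousAt).continuousOn,
    fun x t _ => hderiv x t⟩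

variable {M : ℕ} {u : V → ℝ → ℝ} {C : ℝ}

theorem IsHeatSolution.abs_le_pow_div_factorial (hM : ∀ v, G.degree v ≤ M)
    (hu : IsHeatSolution G u) (h₀ : ∀ x, u x 0 = 0) (hC : ∀ x, ∀ t : ℝ, 0 ≤ t → |u x t| ≤ C)
    (n : ℕ) (x : V) {t : ℝ} (ht : 0 ≤ t) : |u x t| ≤ C * ((2 * M * t) ^ n / n !) := by
  induction n generalizing x t with
  | zero => simpa using hC x t ht
  | succ n ih =>
    refine abs_le_of_abs_deriv_le_deriv (hu.continuousOn x) (by fun_prop) (hu.hasDerivAt x)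
      (fun s _ => (hasDerivAt_pow_succ_div_factorial (2 * M) s n).const_mul C) (fun s hs => ?_)
      (by simp [h₀]) ht
    rw [abs_neg, mul_left_comm]
    exact abs_combLap_le hM (fun z => ih z hs.le) x

theorem IsHeatSolution.eq_zero_of_bounded (hM : ∀ v, G.degree v ≤ M)
    (hu : IsHeatSolution G u) (h₀ : ∀ x, u x 0 = 0) (hC : ∀ x, ∀ t : ℝ, 0 ≤ t → |u x t| ≤ C)
    (x : V) {t : ℝ} (ht : 0 ≤ t) : u x t = 0 := by
  have hlim : Tendsto (fun n : ℕ => C * ((2 * M * t) ^ n / n !)) atTop (nhds 0) := by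
    simpa using (FloorSemiring.tendsto_pow_div_factorial_atTop (2 * M * t)).const_mul C
  exact abs_nonpos_iff.1 <|
    ge_of_tendsto' hlim fun n => hu.abs_le_pow_div_factorial hM h₀ hC n x ht

end HeatEquation

theorem heat_kernel_unique_fundamental_solution_general {V : Type*} [DecidableEq V]
    (G : SimpleGraph V) [G.LocallyFinite]
    (M : ℕ) (hM : ∀ v, G.degree v ≤ M)
    (A : lp (fun _ : V => ℝ) 2 →L[ℝ] lp (fun _ : V => ℝ) 2)
    (hA : ∀ (f : lp (fun _ : V => ℝ) 2) (v : V), A f v = combLap G (⇑f) v)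
    (y : V) :
    -- the heat kernel is a bounded nonnegative solution ...
    ((∀ x, ContinuousOn (fun t : ℝ => NormedSpace.exp (-t • A) (lp.single 2 y 1) x)
        (Set.Ici 0)) ∧
      (∀ x, ∀ t : ℝ, 0 < t →
        HasDerivAt (fun s : ℝ => NormedSpace.exp (-s • A) (lp.single 2 y 1) x)
          (-(combLap G (fun z => NormedSpace.exp (-t • A) (lp.single 2 y 1) z) x)) t) ∧
      (∀ x, NormedSpace.exp (-(0 : ℝ) • A) (lp.single 2 y 1) x =
        if x = y then 1 else 0) ∧
      (∀ x, ∀ t : ℝ, 0 ≤ t → 0 ≤ NormedSpace.exp (-t • A) (lp.single 2 y 1) x) ∧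
      (∃ N : ℝ, ∀ x, ∀ t : ℝ, 0 ≤ t →
        |NormedSpace.exp (-t • A) (lp.single 2 y 1) x| ≤ N)) ∧
    -- ... and it is the unique such solution
    (∀ v : V → ℝ → ℝ,
      (∀ x, ContinuousOn (v x) (Set.Ici 0)) →
      (∀ x, ∀ t : ℝ, 0 < t →
        HasDerivAt (v x) (-(combLap G (fun z => v z t) x)) t) →
      (∀ x, v x 0 = if x = y then 1 else 0) →
      (∀ x, ∀ t : ℝ, 0 ≤ t → 0 ≤ v x t) →
      (∃ N : ℝ, ∀ x, ∀ t : ℝ, 0 ≤ t → |v x t| ≤ N) →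
      ∀ x, ∀ t : ℝ, 0 ≤ t → v x t = NormedSpace.exp (-t • A) (lp.single 2 y 1) x) := by
  have hδ (z : V) : (lp.single 2 y 1 : lp (fun _ : V => ℝ) 2) z = if z = y then 1 else 0 := by
    rw [lp.single_apply, Pi.single_apply]
  have hp := isHeatSolution_exp_neg_smul_apply hA (lp.single 2 y 1)
  have hp₀ (x : V) : exp (-(0 : ℝ) • A) (lp.single 2 y 1) x = if x = y then 1 else 0 := by
    simpa using hδ x
  have hp₀₁ (x : V) {t : ℝ} (ht : 0 ≤ t) : exp (-t • A) (lp.single 2 y 1) x ∈ Icc 0 1 :=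
    exp_neg_smul_apply_mem_Icc hM hA (fun z => by rw [hδ]; split_ifs <;> simp) ht x
  have hp_abs (x : V) {t : ℝ} (ht : 0 ≤ t) : |exp (-t • A) (lp.single 2 y 1) x| ≤ 1 :=
    abs_le.2 ⟨by linarith [(hp₀₁ x ht).1], (hp₀₁ x ht).2⟩
  refine ⟨⟨hp.continuousOn, hp.hasDerivAt, hp₀, fun x t ht => (hp₀₁ x ht).1, 1,
    fun x t ht => hp_abs x ht⟩, ?_⟩
  rintro v hv_cont hv_deriv hv₀ - ⟨N, hN⟩ x t ht
  exact sub_eq_zero.1 <| (IsHeatSolution.sub ⟨hv_cont, hv_deriv⟩ hp).eq_zero_of_bounded hM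
    (fun x => sub_eq_zero.2 ((hv₀ x).trans (hp₀ x).symm)) (C := N + 1)
    (fun x t ht => (abs_sub _ _).trans (add_le_add (hN x t ht) (hp_abs x ht))) x ht

/-- Uniqueness of the fundamental solution of the heat equation on a graph of
bounded valence: `p_t(x,y) = (e^{-tΔ} δ_y)(x)` is the unique bounded nonnegative
solution of `Δ_x v + ∂v/∂t = 0` with initial condition `v(x,0) = δ_y(x)`. -/
theorem heat_kernel_unique_fundamental_solution {V : Type*} [DecidableEq V]
    (G : SimpleGraph V) [G.LocallyFinite] (hconn : G.Connected)
    (M : ℕ) (hM : ∀ v, G.degree v ≤ M)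
    (A : lp (fun _ : V => ℝ) 2 →L[ℝ] lp (fun _ : V => ℝ) 2)
    (hA : ∀ (f : lp (fun _ : V => ℝ) 2) (v : V), A f v = combLap G (⇑f) v)
    (y : V) :
    -- the heat kernel is a bounded nonnegative solution ...
    ((∀ x, ContinuousOn (fun t : ℝ => NormedSpace.exp (-t • A) (lp.single 2 y 1) x)
        (Set.Ici 0)) ∧
      (∀ x, ∀ t : ℝ, 0 < t →
        HasDerivAt (fun s : ℝ => NormedSpace.exp (-s • A) (lp.single 2 y 1) x)
          (-(combLap G (fun z => NormedSpace.exp (-t • A) (lp.single 2 y 1) z) x)) t) ∧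
      (∀ x, NormedSpace.exp (-(0 : ℝ) • A) (lp.single 2 y 1) x =
        if x = y then 1 else 0) ∧
      (∀ x, ∀ t : ℝ, 0 ≤ t → 0 ≤ NormedSpace.exp (-t • A) (lp.single 2 y 1) x) ∧
      (∃ N : ℝ, ∀ x, ∀ t : ℝ, 0 ≤ t →
        |NormedSpace.exp (-t • A) (lp.single 2 y 1) x| ≤ N)) ∧
    -- ... and it is the unique such solution
    (∀ v : V → ℝ → ℝ,
      (∀ x, ContinuousOn (v x) (Set.Ici 0)) →
      (∀ x, ∀ t : ℝ, 0 < t →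
        HasDerivAt (v x) (-(combLap G (fun z => v z t) x)) t) →
      (∀ x, v x 0 = if x = y then 1 else 0) →
      (∀ x, ∀ t : ℝ, 0 ≤ t → 0 ≤ v x t) →
      (∃ N : ℝ, ∀ x, ∀ t : ℝ, 0 ≤ t → |v x t| ≤ N) →
      ∀ x, ∀ t : ℝ, 0 ≤ t → v x t = NormedSpace.exp (-t • A) (lp.single 2 y 1) x) :=
  heat_kernel_unique_fundamental_solution_general G M hM A hA y
end
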